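/- An m-th order n-dimensional real tensor A is an R0-tensor if and only if for every a ∈ ℝ^n the solution map Sol is locally bounded at (A,a), i.e., there exists an open neighborhood U of (A,a) in ℝ^{[m,n]} × ℝ^n such that the set ⋃_{(B,b) ∈ U} Sol(B,b) is bounded in ℝ^n. -/
import Mathlib


open Finset MeasureTheory Pointwise

/-- For a tensor `A` of order `k+1` and dimension `n` (entries `A i j` = `a_{i, j 0, …, j (k-1)}`),
`tApply A x` is the vector `A x^{k}` with `i`-th component
`∑_{i_2,…,i_{k+1}} a_{i i_2 ⋯ i_{k+1}} x_{i_2} ⋯ x_{i_{k+1}}`. -/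
noncomputable def tApply {n k : ℕ} (A : Fin n → (Fin k → Fin n) → ℝ) (x : Fin n → ℝ) :
    Fin n → ℝ :=
  fun i => ∑ j : Fin k → Fin n, A i j * ∏ l : Fin k, x (j l)

/-- The solution set of the tensor complementarity problem `TCP(A,a)`. -/
def Sol {n k : ℕ} (A : Fin n → (Fin k → Fin n) → ℝ) (a : Fin n → ℝ) : Set (Fin n → ℝ) :=
  {x | (∀ i, 0 ≤ x i) ∧ (∀ i, 0 ≤ tApply A x i + a i) ∧ ∑ i, x i * (tApply A x i + a i) = 0}

/-- `A` is an R₀-tensor if `Sol(A,0) = {0}`. -/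
def IsR0 {n k : ℕ} (A : Fin n → (Fin k → Fin n) → ℝ) : Prop := Sol A 0 = {0}

/-- Frobenius norm of a tensor. -/
noncomputable def tNorm {n k : ℕ} (A : Fin n → (Fin k → Fin n) → ℝ) : ℝ :=
  Real.sqrt (∑ i, ∑ j, (A i j) ^ 2)

/-- Euclidean norm of a vector in ℝⁿ. -/
noncomputable def eNorm {n : ℕ} (x : Fin n → ℝ) : ℝ := Real.sqrt (∑ i, (x i) ^ 2)


lemma tApply_smul {n k : ℕ} (A : Fin n → (Fin k → Fin n) → ℝ) (t : ℝ) (x : Fin n → ℝ)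
    (i : Fin n) : tApply A (t • x) i = t ^ k * tApply A x i := by
  simp only [tApply, Finset.mul_sum]
  refine Finset.sum_congr rfl fun j _ => ?_
  have h : ∏ l : Fin k, (t • x) (j l) = t ^ k * ∏ l : Fin k, x (j l) := by
    simp [Finset.prod_mul_distrib]
  rw [h]; ring

lemma tApply_sub {n k : ℕ} (A B : Fin n → (Fin k → Fin n) → ℝ) (x : Fin n → ℝ) (i : Fin n) :
    tApply B x i - tApply A x i = ∑ j : Fin k → Fin n, (B i j - A i j) * ∏ l : Fin k, x (j l) := by
  simp [tApply, sub_mul, Finset.sum_sub_distrib]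

lemma abs_sum_prod_le {n k : ℕ} (c : (Fin k → Fin n) → ℝ) (x : Fin n → ℝ)
    (hx : ∀ l, |x l| ≤ 1) :
    |∑ j : Fin k → Fin n, c j * ∏ l : Fin k, x (j l)| ≤ ∑ j : Fin k → Fin n, |c j| := by
  refine (Finset.abs_sum_le_sum_abs _ _).trans (Finset.sum_le_sum fun j _ => ?_)
  rw [abs_mul]
  have h1 : |∏ l : Fin k, x (j l)| ≤ 1 := by
    rw [Finset.abs_prod]
    exact Finset.prod_le_one (fun l _ => abs_nonneg _) (fun l _ => hx _)
  calc |c j| * |∏ l : Fin k, x (j l)| ≤ |c j| * 1 :=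
        mul_le_mul_of_nonneg_left h1 (abs_nonneg _)
    _ = |c j| := mul_one _

lemma tApply_continuous {n k : ℕ} (A : Fin n → (Fin k → Fin n) → ℝ) (i : Fin n) :
    Continuous fun x => tApply A x i := by
  unfold tApply
  exact continuous_finset_sum _ fun j _ =>
    continuous_const.mul (continuous_finset_prod _ fun l _ => continuous_apply _)

/-- `A` is R₀ iff the solution map is locally bounded at `(A,a)` for every `a`. -/
theorem stmt_4 (m n : ℕ) (hm : 2 ≤ m) (hn : 2 ≤ n) (A : Fin n → (Fin (m - 1) → Fin n) → ℝ) :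
    IsR0 A ↔ ∀ a : Fin n → ℝ, ∃ U : Set ((Fin n → (Fin (m - 1) → Fin n) → ℝ) × (Fin n → ℝ)),
      IsOpen U ∧ (A, a) ∈ U ∧ Bornology.IsBounded (⋃ p ∈ U, Sol p.1 p.2) := by
  constructor
  · intro hR0 a
    have hk0 : m - 1 ≠ 0 := by omega
    have hk1 : 1 ≤ m - 1 := by omega
    haveI : Nonempty (Fin n) := ⟨⟨0, by omega⟩⟩
    have hn0 : (0 : ℝ) < n := by exact_mod_cast Nat.pos_of_ne_zero (by omega)
    -- the compact set S
    set S : Set (Fin n → ℝ) := {y | (∀ i, 0 ≤ y i) ∧ ‖y‖ = 1} with hSdef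
    have hSc : IsCompact S := by
      have h2 : IsClosed S := by
        have : S = (⋂ i, {y : Fin n → ℝ | 0 ≤ y i}) ∩ {y : Fin n → ℝ | ‖y‖ = 1} := by
          ext y; simp [hSdef, Set.mem_iInter]
        rw [this]
        exact (isClosed_iInter fun i =>
          isClosed_le continuous_const (continuous_apply i)).inter
          (isClosed_eq continuous_norm continuous_const)
      exact (isCompact_closedBall (0 : Fin n → ℝ) 1).of_isClosed_subset h2
        (fun y hy => by simp [Metric.mem_closedBall, dist_zero_right, hy.2.le])
    have hSne : S.Nonempty := by
      refine ⟨fun _ => 1, fun i => zero_le_one, ?_⟩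
      rw [pi_norm_const]; norm_num
    -- the gap function
    set g : (Fin n → ℝ) → ℝ :=
      fun y => (∑ i, max (-(tApply A y i)) 0) + |∑ i, y i * tApply A y i| with hgdef
    have hgcont : Continuous g := by
      apply Continuous.add
      · exact continuous_finset_sum _ fun i _ =>
          ((tApply_continuous A i).neg.max continuous_const)
      · exact (continuous_finset_sum _ fun i _ =>
          (continuous_apply i).mul (tApply_continuous A i)).abs
    have hgpos : ∀ y ∈ S, 0 < g y := by
      intro y hy
      rcases lt_or_ge 0 (g y) with h | h
      · exact h
      exfalso
      have h1 : 0 ≤ ∑ i, max (-(tApply A y i)) 0 :=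
        Finset.sum_nonneg fun i _ => le_max_right _ _
      have h2 : 0 ≤ |∑ i, y i * tApply A y i| := abs_nonneg _
      have e1 : ∑ i, max (-(tApply A y i)) 0 = 0 := by
        have : g y = (∑ i, max (-(tApply A y i)) 0) + |∑ i, y i * tApply A y i| := rfl
        linarith
      have e2 : |∑ i, y i * tApply A y i| = 0 := by
        have : g y = (∑ i, max (-(tApply A y i)) 0) + |∑ i, y i * tApply A y i| := rfl
        linarith
      have hnn : ∀ i, 0 ≤ tApply A y i := by
        intro i
        have hmax := (Finset.sum_eq_zero_iff_of_nonneg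
          (fun i _ => le_max_right (-(tApply A y i)) 0)).mp e1 i (Finset.mem_univ i)
        have : -(tApply A y i) ≤ 0 := by
          by_contra hcc
          push_neg at hcc
          rw [max_eq_left hcc.le] at hmax
          linarith
        linarith
      have hySol : y ∈ Sol A 0 := by
        refine ⟨hy.1, fun i => by simpa using hnn i, ?_⟩
        have := abs_eq_zero.mp e2
        simpa using this
      rw [hR0] at hySol
      have : ‖y‖ = 1 := hy.2
      rw [hySol] at this
      simp at this
    -- the minimum of g on S
    obtain ⟨y₀, hy₀S, hy₀min⟩ := hSc.exists_isMinOn hSne hgcont.continuousOn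
    obtain ⟨ε, hε, hεle⟩ : ∃ ε : ℝ, 0 < ε ∧ ∀ y ∈ S, ε ≤ g y :=
      ⟨g y₀, hgpos y₀ hy₀S, fun y hy => hy₀min hy⟩
    -- abstract constants
    obtain ⟨C, hC, hCs⟩ : ∃ C : ℝ, 0 ≤ C ∧
        ∀ c : ℝ, (∑ _j : Fin (m - 1) → Fin n, c) = C * c :=
      ⟨(Fintype.card (Fin (m - 1) → Fin n) : ℝ), Nat.cast_nonneg _, fun c => by
        rw [Finset.sum_const, Finset.card_univ, nsmul_eq_mul]⟩
    obtain ⟨N, hN, hNs⟩ : ∃ N : ℝ, 0 < N ∧ ∀ c : ℝ, (∑ _i : Fin n, c) = N * c :=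
      ⟨(n : ℝ), hn0, fun c => by
        rw [Finset.sum_const, Finset.card_univ, nsmul_eq_mul, Fintype.card_fin]⟩
    obtain ⟨M, hM, hMa⟩ : ∃ M : ℝ, 0 < M ∧ ‖a‖ + 1 ≤ M := ⟨‖a‖ + 1, by positivity, le_refl _⟩
    obtain ⟨δ, hδ, hCδ⟩ : ∃ δ : ℝ, 0 < δ ∧ 2 * N * (C * δ) ≤ ε / 4 := by
      have hδ : (0:ℝ) < ε / (8 * N * (C + 1)) := by positivity
      refine ⟨ε / (8 * N * (C + 1)), hδ, ?_⟩
      have heq : (ε / (8 * N * (C + 1))) * (8 * N * (C + 1)) = ε := by field_simp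
      nlinarith [mul_pos hN hδ]
    obtain ⟨R, hR1, hRε⟩ : ∃ R : ℝ, 1 ≤ R ∧ 4 * N * M ≤ R * ε := by
      refine ⟨max 1 (4 * N * M / ε), le_max_left _ _, ?_⟩
      have h1 : 4 * N * M / ε ≤ max 1 (4 * N * M / ε) := le_max_right _ _
      have h2 := mul_le_mul_of_nonneg_right h1 hε.le
      rwa [div_mul_cancel₀ _ (ne_of_gt hε)] at h2
    refine ⟨Metric.ball A δ ×ˢ Metric.ball a 1,
      Metric.isOpen_ball.prod Metric.isOpen_ball,
      ⟨Metric.mem_ball_self hδ, Metric.mem_ball_self one_pos⟩, ?_⟩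
    apply (Metric.isBounded_closedBall (x := (0 : Fin n → ℝ)) (r := R)).subset
    rintro x hx
    simp only [Set.mem_iUnion] at hx
    obtain ⟨p, hpU, hxSol⟩ := hx
    rw [Metric.mem_closedBall, dist_zero_right]
    by_contra hcon
    push_neg at hcon
    obtain ⟨hpA, hpa⟩ := hpU
    obtain ⟨hx1, hx2, hx3⟩ := hxSol
    obtain ⟨B, b⟩ := p
    simp only at hpA hpa hx1 hx2 hx3 hcon ⊢
    obtain ⟨r, hrdef, hr1, hr0⟩ : ∃ r : ℝ, r = ‖x‖ ∧ 1 < r ∧ 0 < r :=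
      ⟨‖x‖, rfl, lt_of_le_of_lt hR1 hcon, lt_trans one_pos (lt_of_le_of_lt hR1 hcon)⟩
    have hRr : R < r := by rw [hrdef]; exact hcon
    set y : Fin n → ℝ := r⁻¹ • x with hydef
    have hynorm : ‖y‖ = 1 := by
      rw [hydef, norm_smul, norm_inv, Real.norm_eq_abs, abs_of_pos hr0, ← hrdef,
        inv_mul_cancel₀ (ne_of_gt hr0)]
    have hyi : ∀ i, 0 ≤ y i := fun i => mul_nonneg (inv_nonneg.mpr hr0.le) (hx1 i)
    have hyS : y ∈ S := ⟨hyi, hynorm⟩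
    have hyabs : ∀ i, |y i| ≤ 1 := by
      intro i
      have h := norm_le_pi_norm y i
      rw [Real.norm_eq_abs, hynorm] at h
      exact h
    obtain ⟨s, hsdef, hs0, hsr⟩ : ∃ s : ℝ, s = r⁻¹ ^ (m - 1) ∧ 0 < s ∧ s * r ≤ 1 := by
      refine ⟨r⁻¹ ^ (m - 1), rfl, pow_pos (inv_pos.mpr hr0) _, ?_⟩
      have h1 : r⁻¹ ^ (m - 1) ≤ r⁻¹ := by
        calc r⁻¹ ^ (m - 1) ≤ r⁻¹ ^ 1 :=
              pow_le_pow_of_le_one (inv_nonneg.mpr hr0.le)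
                (inv_le_one_of_one_le₀ hr1.le) hk1
          _ = r⁻¹ := pow_one _
      calc r⁻¹ ^ (m - 1) * r ≤ r⁻¹ * r := mul_le_mul_of_nonneg_right h1 hr0.le
        _ = 1 := inv_mul_cancel₀ (ne_of_gt hr0)
    have hsmulB : ∀ i, tApply B y i = s * tApply B x i := by
      intro i; rw [hsdef]; exact tApply_smul B r⁻¹ x i
    have hsmulA : ∀ i, tApply A y i = s * tApply A x i := by
      intro i; rw [hsdef]; exact tApply_smul A r⁻¹ x i
    have hbM : ∀ i, |b i| ≤ M := by
      intro i
      have h1 : |b i| ≤ ‖b‖ := by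
        have := norm_le_pi_norm b i
        rwa [Real.norm_eq_abs] at this
      have h2 : ‖b‖ ≤ ‖b - a‖ + ‖a‖ := by
        calc ‖b‖ = ‖b - a + a‖ := by rw [sub_add_cancel]
          _ ≤ ‖b - a‖ + ‖a‖ := norm_add_le _ _
      have h3 : ‖b - a‖ < 1 := by
        rw [← dist_eq_norm]
        exact hpa
      linarith
    have hD : ∀ i, |tApply B y i - tApply A y i| ≤ C * δ := by
      intro i
      rw [tApply_sub]
      refine (abs_sum_prod_le _ _ hyabs).trans ?_
      have hj : ∀ j : Fin (m - 1) → Fin n, |B i j - A i j| ≤ δ := by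
        intro j
        have h1 : dist (B i j) (A i j) ≤ dist (B i) (A i) := dist_le_pi_dist (B i) (A i) j
        have h2 : dist (B i) (A i) ≤ dist B A := dist_le_pi_dist B A i
        have h3 : dist B A < δ := hpA
        rw [Real.dist_eq] at h1
        linarith
      calc ∑ j : Fin (m - 1) → Fin n, |B i j - A i j|
          ≤ ∑ _j : Fin (m - 1) → Fin n, δ := Finset.sum_le_sum fun j _ => hj j
        _ = C * δ := hCs δ
    -- lower bound on tApply A y
    have hTA_lb : ∀ i, -(s * M + C * δ) ≤ tApply A y i := by
      intro i
      have p1 : 0 ≤ s * (tApply B x i + b i) := mul_nonneg hs0.le (hx2 i)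
      have p2 : s * b i ≤ s * M :=
        mul_le_mul_of_nonneg_left ((le_abs_self _).trans (hbM i)) hs0.le
      have p3 := abs_le.mp (hD i)
      have e : tApply B y i = s * tApply B x i := hsmulB i
      have expand : s * (tApply B x i + b i) = s * tApply B x i + s * b i := mul_add _ _ _
      linarith [p3.1, p3.2]
    -- first part of g bound
    have hterm1 : ∑ i, max (-(tApply A y i)) 0 ≤ N * (s * M + C * δ) := by
      have hbd : ∀ i : Fin n, max (-(tApply A y i)) 0 ≤ s * M + C * δ := by
        intro i
        apply max_le
        · linarith [hTA_lb i]
        · positivity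
      calc ∑ i, max (-(tApply A y i)) 0 ≤ ∑ _i : Fin n, (s * M + C * δ) :=
            Finset.sum_le_sum fun i _ => hbd i
        _ = N * (s * M + C * δ) := hNs _
    -- the complementarity sum for y
    have hzero : ∑ i, y i * (tApply B y i + s * b i) = 0 := by
      have heach : ∀ i : Fin n, y i * (tApply B y i + s * b i)
          = (r⁻¹ * s) * (x i * (tApply B x i + b i)) := by
        intro i
        rw [hsmulB i]
        have hyx : y i = r⁻¹ * x i := rfl
        rw [hyx]; ring
      rw [Finset.sum_congr rfl fun i _ => heach i, ← Finset.mul_sum, hx3, mul_zero]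
    -- second part of g bound
    have hterm2 : |∑ i, y i * tApply A y i| ≤ N * (s * M + C * δ) := by
      have heq : ∑ i, y i * tApply A y i
          = ∑ i, y i * (tApply A y i - tApply B y i - s * b i) := by
        have hsplit : ∑ i, y i * tApply A y i
            = ∑ i, (y i * (tApply A y i - tApply B y i - s * b i)
                + y i * (tApply B y i + s * b i)) := by
          apply Finset.sum_congr rfl
          intro i _
          ring
        rw [hsplit, Finset.sum_add_distrib, hzero, add_zero]
      rw [heq]
      refine (Finset.abs_sum_le_sum_abs _ _).trans ?_
      have hbound : ∀ i : Fin n, |y i * (tApply A y i - tApply B y i - s * b i)|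
          ≤ s * M + C * δ := by
        intro i
        rw [abs_mul]
        have h1 : |tApply A y i - tApply B y i - s * b i| ≤ C * δ + s * M := by
          have h2 : |tApply A y i - tApply B y i| ≤ C * δ := by
            rw [← abs_neg]
            simpa using hD i
          have h3 : |s * b i| ≤ s * M := by
            rw [abs_mul, abs_of_pos hs0]
            exact mul_le_mul_of_nonneg_left (hbM i) hs0.le
          calc |tApply A y i - tApply B y i - s * b i|
              ≤ |tApply A y i - tApply B y i| + |s * b i| := abs_sub _ _
            _ ≤ C * δ + s * M := add_le_add h2 h3
        calc |y i| * |tApply A y i - tApply B y i - s * b i|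
            ≤ 1 * (C * δ + s * M) :=
              mul_le_mul (hyabs i) h1 (abs_nonneg _) zero_le_one
          _ = s * M + C * δ := by ring
      calc ∑ i, |y i * (tApply A y i - tApply B y i - s * b i)|
          ≤ ∑ _i : Fin n, (s * M + C * δ) := Finset.sum_le_sum fun i _ => hbound i
        _ = N * (s * M + C * δ) := hNs _
    -- combine
    have hgy : ε ≤ g y := hεle y hyS
    have hgyval : g y = (∑ i, max (-(tApply A y i)) 0) + |∑ i, y i * tApply A y i| := rfl
    have hmain : ε ≤ 2 * N * (s * M + C * δ) := by
      rw [hgyval] at hgy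
      linarith
    have hsM : ε / 2 ≤ 2 * N * (s * M) := by
      have expand : 2 * N * (s * M + C * δ) = 2 * N * (s * M) + 2 * N * (C * δ) := by ring
      linarith
    -- final contradiction
    have h4 : 4 * N * M < r * ε :=
      lt_of_le_of_lt hRε (by exact mul_lt_mul_of_pos_right hRr hε)
    have h5 : 2 * N * (s * M) * r ≤ 2 * N * M := by
      have h6 := mul_le_mul_of_nonneg_left hsr (show (0:ℝ) ≤ 2 * N * M by positivity)
      nlinarith
    have h7 := mul_le_mul_of_nonneg_right hsM hr0.le
    nlinarith
  · intro H
    have hk0 : m - 1 ≠ 0 := by omega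
    obtain ⟨U, hUopen, hUmem, hUbd⟩ := H 0
    have hsub : Sol A 0 ⊆ ⋃ p ∈ U, Sol p.1 p.2 := fun z hz =>
      Set.mem_biUnion hUmem hz
    have hbd : Bornology.IsBounded (Sol A 0) := hUbd.subset hsub
    obtain ⟨R, hR⟩ := isBounded_iff_forall_norm_le.mp hbd
    unfold IsR0
    apply Set.eq_singleton_iff_unique_mem.mpr
    constructor
    · refine ⟨fun i => le_refl 0, fun i => ?_, ?_⟩
      · have : tApply A (0 : Fin n → ℝ) i = 0 := by
          simp [tApply, zero_pow hk0]
        simp [this]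
      · simp
    · intro x hx
      by_contra hxne
      have hxnorm : 0 < ‖x‖ := norm_pos_iff.mpr hxne
      -- t • x ∈ Sol A 0 for all t ≥ 0
      have hscale : ∀ t : ℝ, 0 ≤ t → t • x ∈ Sol A 0 := by
        intro t ht
        obtain ⟨h1, h2, h3⟩ := hx
        refine ⟨fun i => mul_nonneg ht (h1 i), fun i => ?_, ?_⟩
        · rw [Pi.zero_apply, add_zero, tApply_smul]
          exact mul_nonneg (pow_nonneg ht _) (by simpa using h2 i)
        · have : ∀ i : Fin n, (t • x) i * (tApply A (t • x) i + (0 : Fin n → ℝ) i)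
              = t ^ m * (x i * (tApply A x i + (0 : Fin n → ℝ) i)) := by
            intro i
            rw [tApply_smul]
            have : t * t ^ (m - 1) = t ^ m := by
              rw [← pow_succ']
              congr 1
              omega
            simp only [Pi.smul_apply, smul_eq_mul, Pi.zero_apply, add_zero]
            rw [← this]; ring
          rw [Finset.sum_congr rfl fun i _ => this i, ← Finset.mul_sum, h3, mul_zero]
      have hR0 : 0 ≤ R := le_trans (norm_nonneg _) (hR x hx)
      have := hR (((R + 1) / ‖x‖) • x) (hscale _ (by positivity))
      rw [norm_smul, norm_div, Real.norm_eq_abs, norm_norm,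
        div_mul_cancel₀ _ (ne_of_gt hxnorm)] at this
      rw [abs_of_nonneg (by positivity)] at this
      linarith
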